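/- arXiv:2307.16222 — 2 statements merged into one kernel-verified Lean document; each statement's English description precedes it below -/
import Mathlib

section
/- Suppose l is separable, tr is a trace on l with dual bases (e_i), (f_i), and U is an l-bimodule. Then the k-linear map U → U, m ↦ Σ_i e_i·m·f_i, takes its values in the subspace U^l of l-central elements, vanishes on the subspace [l, U], and the induced k-linear map U/[l, U] → U^l is a bijection. -/
/-!
The Casimir element `∑ i, e i ⊗ f i` of the trace form satisfies
`∑ i, a e i ⊗ f i = ∑ i, e i ⊗ f i a` and `∑ i, e i a ⊗ f i = ∑ i, e i ⊗ a f i`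
(expand both sides in the dual bases). The first identity makes the values of
`m ↦ ∑ i, e i m f i` central, the second makes it vanish on commutators.

Separability splits the multiplication `l ⊗ lᵐᵒᵖ → l`; the image `s` of `1` satisfies
`(a ⊗ 1) s = (1 ⊗ a) s`, and contracting its right factor with `tr` gives `c` with
`∑ i, f i c e i = 1` (and likewise `c'` with `∑ i, e i c' f i = 1`, for the dual pair `(f, e)`).
A central `u` is then the image of `u c'`, and if `∑ i, e i u f i = 0` then
`u = ∑ i, (u f i · c e i - c e i · u f i)` lies in `[l, U]`.
-/

open TensorProduct MulOpposite

variable (k : Type*) [Field k] (l : Type*) [Ring l] [Algebra k l]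

/-- Right multiplication, as a `k`-algebra homomorphism `lᵐᵒᵖ →ₐ[k] End_k(l)`. -/
def mulRightAlgHom : lᵐᵒᵖ →ₐ[k] Module.End k l where
  toFun b := LinearMap.mulRight k b.unop
  map_one' := by ext x; simp
  map_mul' b c := by ext x; simp [mul_assoc]
  map_zero' := by ext x; simp
  map_add' b c := by ext x; simp [mul_add]
  commutes' c := by
    ext x
    simp [Algebra.smul_def, (Algebra.commutes c x).symm]

/-- The `k`-algebra homomorphism `l ⊗[k] lᵐᵒᵖ →ₐ[k] End_k(l)` given by
`a ⊗ bᵒᵖ ↦ (x ↦ a * x * b)`. -/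
noncomputable def envHom : (l ⊗[k] lᵐᵒᵖ) →ₐ[k] Module.End k l :=
  Algebra.TensorProduct.lift (Algebra.lmul k l) (mulRightAlgHom k l)
    (fun a b => by
      ext x
      simp [mulRightAlgHom, Module.End.mul_apply, mul_assoc])

/-- `l` as a module over its enveloping algebra `l ⊗[k] lᵐᵒᵖ`, via `(a ⊗ bᵒᵖ) • x = a * x * b`. -/
noncomputable instance envModule : Module (l ⊗[k] lᵐᵒᵖ) l :=
  Module.compHom l (envHom k l).toRingHom

variable {k l}

section DualBases

variable {k l : Type*} [CommRing k] [Ring l] [Algebra k l]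
  {ι : Type*} [Fintype ι] [DecidableEq ι] {tr : l →ₗ[k] k} {e f : Module.Basis ι k l}

theorem sum_trace_mul_smul_left (hdual : ∀ i j, tr (e i * f j) = if i = j then 1 else 0)
    (x : l) : ∑ j, tr (x * f j) • e j = x := by
  have hrepr (j : ι) : tr (x * f j) = e.repr x j :=
    calc tr (x * f j) = tr ((∑ i, e.repr x i • e i) * f j) := by rw [e.sum_repr]
      _ = e.repr x j := by
        simp only [Finset.sum_mul, smul_mul_assoc, map_sum, map_smul, hdual, smul_eq_mul, mul_ite,
          mul_one, mul_zero, Finset.sum_ite_eq', Finset.mem_univ, if_true]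
  simp only [hrepr, e.sum_repr]

theorem sum_trace_mul_smul_right (hdual : ∀ i j, tr (e i * f j) = if i = j then 1 else 0)
    (x : l) : ∑ j, tr (e j * x) • f j = x := by
  have hrepr (j : ι) : tr (e j * x) = f.repr x j :=
    calc tr (e j * x) = tr (e j * ∑ i, f.repr x i • f i) := by rw [f.sum_repr]
      _ = f.repr x j := by
        simp only [Finset.mul_sum, mul_smul_comm, map_sum, map_smul, hdual, smul_eq_mul, mul_ite,
          mul_one, mul_zero, Finset.sum_ite_eq, Finset.mem_univ, if_true]
  simp only [hrepr, f.sum_repr]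

theorem sum_apply_left_eq_sum_apply_right
    (hdual : ∀ i j, tr (e i * f j) = if i = j then 1 else 0)
    {M : Type*} [AddCommMonoid M] [Module k M] (φ : l →ₗ[k] l →ₗ[k] M) {A B : l → l}
    (hAB : ∀ x y, tr (A x * y) = tr (x * B y)) :
    ∑ i, φ (A (e i)) (f i) = ∑ i, φ (e i) (B (f i)) := by
  calc ∑ i, φ (A (e i)) (f i) = ∑ i, ∑ j, tr (A (e i) * f j) • φ (e j) (f i) := by
        congr! with i
        conv_lhs => rw [← sum_trace_mul_smul_left hdual (A (e i))]
        simp only [map_sum, map_smul, LinearMap.sum_apply, LinearMap.smul_apply]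
    _ = ∑ j, ∑ i, tr (e i * B (f j)) • φ (e j) (f i) := by
        rw [Finset.sum_comm]
        simp only [hAB]
    _ = ∑ j, φ (e j) (B (f j)) := by
        congr! with j
        conv_rhs => rw [← sum_trace_mul_smul_right hdual (B (f j))]
        simp only [map_sum, map_smul]

end DualBases

section Bimodule

variable (k : Type*) [CommRing k] {l : Type*} [Ring l] [Algebra k l]
  (U : Type*) [AddCommGroup U] [Module k U] [Module l U] [Module lᵐᵒᵖ U]
  [IsScalarTower k l U] [IsScalarTower k lᵐᵒᵖ U]

def bimodSMul : l →ₗ[k] l →ₗ[k] Module.End k U :=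
  (LinearMap.mul k (Module.End k U)).compl₁₂ (Algebra.lsmul k k U).toLinearMap
    ((Algebra.lsmul k k U).toLinearMap ∘ₗ (opLinearEquiv k).toLinearMap)

variable {k U}

@[simp] theorem bimodSMul_apply (x y : l) (u : U) : bimodSMul k U x y u = x • op y • u := rfl

variable (k l U) in
def commutatorSpan : Submodule k U :=
  Submodule.span k {w : U | ∃ (a : l) (v : U), w = a • v - op a • v}

variable {ι : Type*} [Fintype ι] {tr : l →ₗ[k] k} {e f : Module.Basis ι k l}

variable (U) in
noncomputable def average (e f : Module.Basis ι k l) : U →ₗ[k] U where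
  toFun u := ∑ i, e i • op (f i) • u
  map_add' u v := by simp only [smul_add, Finset.sum_add_distrib]
  map_smul' c u := by simp only [Finset.smul_sum, smul_comm c, RingHom.id_apply]

theorem average_apply (u : U) : average U e f u = ∑ i, e i • op (f i) • u := rfl

variable [DecidableEq ι] [SMulCommClass l lᵐᵒᵖ U]

theorem smul_average (hsymm : ∀ a b : l, tr (a * b) = tr (b * a))
    (hdual : ∀ i j, tr (e i * f j) = if i = j then 1 else 0) (u : U) (a : l) :
    a • average U e f u = op a • average U e f u := by
  have hswap := LinearMap.congr_fun (sum_apply_left_eq_sum_apply_right hdual (bimodSMul k U)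
    (A := (a * ·)) (B := (· * a)) fun x y => by rw [mul_assoc, hsymm a, mul_assoc]) u
  simp only [LinearMap.sum_apply, bimodSMul_apply] at hswap
  calc a • average U e f u = ∑ i, (a * e i) • op (f i) • u := by
        simp only [average_apply, Finset.smul_sum, mul_smul]
    _ = ∑ i, e i • op (f i * a) • u := hswap
    _ = op a • average U e f u := by
        simp only [average_apply, Finset.smul_sum, op_mul, mul_smul]
        exact Finset.sum_congr rfl fun i _ => smul_comm _ _ _

theorem average_smul (hdual : ∀ i j, tr (e i * f j) = if i = j then 1 else 0) (a : l) (v : U) :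
    average U e f (a • v) = average U e f (op a • v) := by
  have hswap := LinearMap.congr_fun (sum_apply_left_eq_sum_apply_right hdual (bimodSMul k U)
    (A := (· * a)) (B := (a * ·)) fun x y => by rw [mul_assoc]) v
  simp only [LinearMap.sum_apply, bimodSMul_apply] at hswap
  calc average U e f (a • v) = ∑ i, (e i * a) • op (f i) • v := by
        simp only [average_apply, mul_smul, smul_comm a]
    _ = ∑ i, e i • op (a * f i) • v := hswap
    _ = average U e f (op a • v) := by simp only [average_apply, op_mul, mul_smul]

theorem commutatorSpan_le_ker_average (hdual : ∀ i j, tr (e i * f j) = if i = j then 1 else 0) :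
    commutatorSpan k l U ≤ LinearMap.ker (average U e f) := by
  refine Submodule.span_le.mpr ?_
  rintro _ ⟨a, v, rfl⟩
  rw [SetLike.mem_coe, LinearMap.mem_ker, map_sub, average_smul hdual, sub_self]

end Bimodule

section Separable

theorem tmul_op_smul (a b x : l) : (a ⊗ₜ[k] op b) • x = a * x * b := by
  change envHom k l _ x = _
  simp [envHom, mulRightAlgHom, mul_assoc]

theorem exists_separabilityIdempotent [Module.Projective (l ⊗[k] lᵐᵒᵖ) l] :
    ∃ s : l ⊗[k] lᵐᵒᵖ,
      s • (1 : l) = 1 ∧ ∀ a : l, (a ⊗ₜ op 1) * s = (1 ⊗ₜ op a) * s := by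
  let π := LinearMap.toSpanSingleton (l ⊗[k] lᵐᵒᵖ) l 1
  have hπ : Function.Surjective π := fun x =>
    ⟨x ⊗ₜ op 1, by rw [LinearMap.toSpanSingleton_apply, tmul_op_smul, mul_one, mul_one]⟩
  obtain ⟨σ, hσ⟩ := Module.projective_lifting_property π LinearMap.id hπ
  have hπσ (x : l) : σ x • (1 : l) = x := LinearMap.congr_fun hσ x
  refine ⟨σ 1, hπσ 1, fun a => ?_⟩
  rw [← smul_eq_mul, ← smul_eq_mul, ← map_smul, ← map_smul, tmul_op_smul, tmul_op_smul]
  simp only [mul_one, one_mul]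

variable (tr : l →ₗ[k] k)

def traceRight : l ⊗[k] lᵐᵒᵖ →ₗ[k] l :=
  TensorProduct.rid k l ∘ₗ (tr ∘ₗ (opLinearEquiv k).symm.toLinearMap).lTensor l

@[simp] theorem traceRight_tmul (x : l) (y : lᵐᵒᵖ) :
    traceRight tr (x ⊗ₜ y) = tr (unop y) • x := rfl

theorem traceRight_tmul_one_mul (a : l) (w : l ⊗[k] lᵐᵒᵖ) :
    traceRight tr ((a ⊗ₜ op 1) * w) = a * traceRight tr w := by
  induction w using TensorProduct.induction_on with
  | zero => simp
  | tmul x y => simp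
  | add w w' hw hw' => simp only [mul_add, map_add, hw, hw']

variable {tr} {ι : Type*} [Fintype ι] [DecidableEq ι] {e f : Module.Basis ι k l}

theorem sum_traceRight_one_tmul_mul_mul_eq_smul_one
    (hdual : ∀ i j, tr (e i * f j) = if i = j then 1 else 0) (w : l ⊗[k] lᵐᵒᵖ) :
    ∑ i, traceRight tr ((1 ⊗ₜ op (f i)) * w) * e i = w • (1 : l) := by
  induction w using TensorProduct.induction_on with
  | zero =>
    simp only [mul_zero, map_zero, zero_mul, Finset.sum_const_zero]
    exact (zero_smul (l ⊗[k] lᵐᵒᵖ) (1 : l)).symm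
  | tmul x y =>
    obtain ⟨y, rfl⟩ := MulOpposite.op_surjective y
    calc ∑ i, traceRight tr ((1 ⊗ₜ op (f i)) * (x ⊗ₜ op y)) * e i
        = x * ∑ i, tr (y * f i) • e i := by simp [Finset.mul_sum]
      _ = (x ⊗ₜ op y) • (1 : l) := by
        rw [sum_trace_mul_smul_left hdual, tmul_op_smul, mul_one]
  | add w w' hw hw' =>
    simp only [mul_add, map_add, add_mul, Finset.sum_add_distrib, hw, hw', add_smul]

theorem exists_sum_mul_mul_eq_one [Module.Projective (l ⊗[k] lᵐᵒᵖ) l]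
    (hdual : ∀ i j, tr (e i * f j) = if i = j then 1 else 0) :
    ∃ c : l, ∑ i, f i * c * e i = 1 := by
  obtain ⟨s, hs1, hs⟩ := exists_separabilityIdempotent (k := k) (l := l)
  refine ⟨traceRight tr s, ?_⟩
  calc ∑ i, f i * traceRight tr s * e i
        = ∑ i, traceRight tr ((1 ⊗ₜ op (f i)) * s) * e i := by
        simp only [← traceRight_tmul_one_mul, hs]
    _ = 1 := by rw [sum_traceRight_one_tmul_mul_mul_eq_smul_one hdual, hs1]

variable [Module.Projective (l ⊗[k] lᵐᵒᵖ) l]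
  {U : Type*} [AddCommGroup U] [Module k U] [Module l U] [Module lᵐᵒᵖ U]
  [IsScalarTower k l U] [IsScalarTower k lᵐᵒᵖ U]

theorem exists_average_eq_of_forall_smul_eq (hsymm : ∀ a b : l, tr (a * b) = tr (b * a))
    (hdual : ∀ i j, tr (e i * f j) = if i = j then 1 else 0) (u : U)
    (hu : ∀ a : l, a • u = op a • u) : ∃ v, average U e f v = u := by
  have hdual' (i j : ι) : tr (f i * e j) = if i = j then 1 else 0 := by
    rw [hsymm, hdual]
    exact if_congr eq_comm rfl rfl
  obtain ⟨c, hc⟩ := exists_sum_mul_mul_eq_one hdual'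
  refine ⟨op c • u, ?_⟩
  calc average U e f (op c • u) = ∑ i, (e i * c * f i) • u := by
        refine Finset.sum_congr rfl fun i _ => ?_
        rw [← mul_smul, ← op_mul, ← hu, ← mul_smul, ← mul_assoc]
    _ = u := by rw [← Finset.sum_smul, hc, one_smul]

theorem mem_commutatorSpan_of_average_eq_zero
    (hdual : ∀ i j, tr (e i * f j) = if i = j then 1 else 0) {u : U} (hu : average U e f u = 0) :
    u ∈ commutatorSpan k l U := by
  obtain ⟨c, hc⟩ := exists_sum_mul_mul_eq_one hdual
  have hleft : ∑ i, (c * e i) • op (f i) • u = 0 := by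
    simp only [mul_smul, ← Finset.smul_sum]
    rw [← average_apply, hu, smul_zero]
  have hright : ∑ i, op (c * e i) • op (f i) • u = u := by
    calc ∑ i, op (c * e i) • op (f i) • u = ∑ i, op (f i * c * e i) • u := by
          refine Finset.sum_congr rfl fun i _ => ?_
          rw [← mul_smul, ← op_mul, mul_assoc]
      _ = u := by rw [← Finset.sum_smul, ← Finset.op_sum, hc, op_one, one_smul]
  rw [← hright, ← sub_zero (∑ i, _), ← hleft, ← Finset.sum_sub_distrib]
  refine Submodule.sum_mem _ fun i _ => ?_
  rw [← neg_sub]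
  exact neg_mem (Submodule.subset_span ⟨_, _, rfl⟩)

end Separable

theorem statement_4_general {ι : Type*} [Fintype ι] [DecidableEq ι]
    (tr : l →ₗ[k] k)
    (hsymm : ∀ a b : l, tr (a * b) = tr (b * a))
    (e f : Module.Basis ι k l)
    (hdual : ∀ i j, tr (e i * f j) = if i = j then (1 : k) else 0)
    (hsep : Module.Projective (l ⊗[k] lᵐᵒᵖ) l)
    {U : Type*} [AddCommGroup U] [Module k U] [Module l U] [Module lᵐᵒᵖ U]
    [IsScalarTower k l U] [IsScalarTower k lᵐᵒᵖ U] [SMulCommClass l lᵐᵒᵖ U] :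
    -- the averaging map takes values in the `l`-central elements `U^l`
    (∀ (u : U) (a : l),
      a • (∑ i, e i • (op (f i) • u)) = op a • (∑ i, e i • (op (f i) • u))) ∧
    -- it vanishes on the subspace `[l, U]` spanned by commutators
    (∀ u ∈ Submodule.span k {w : U | ∃ (a : l) (v : U), w = a • v - op a • v},
      (∑ i, e i • (op (f i) • u)) = 0) ∧
    -- the induced map `U/[l, U] → U^l` is surjective ...
    (∀ u : U, (∀ a : l, a • u = op a • u) → ∃ v : U, (∑ i, e i • (op (f i) • v)) = u) ∧
    -- ... and injective
    (∀ u : U, (∑ i, e i • (op (f i) • u)) = 0 →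
      u ∈ Submodule.span k {w : U | ∃ (a : l) (v : U), w = a • v - op a • v}) :=
  ⟨smul_average hsymm hdual, fun _ hu => commutatorSpan_le_ker_average hdual hu,
    exists_average_eq_of_forall_smul_eq hsymm hdual,
    fun _ hu => mem_commutatorSpan_of_average_eq_zero hdual hu⟩

/-- Suppose `l` is separable (i.e. projective over its enveloping algebra `l ⊗[k] lᵐᵒᵖ`),
`tr` is a trace on `l` with dual bases `(e i)`, `(f i)`, and `U` is an `l`-bimodule.
Then the map `U → U`, `m ↦ Σ i, e i • m • f i` takes values in the subspace `U^l` of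
`l`-central elements, vanishes on `[l, U]`, and the induced map `U/[l, U] → U^l` is a
bijection. -/
theorem statement_4 [FiniteDimensional k l] {ι : Type*} [Fintype ι] [DecidableEq ι]
    (tr : l →ₗ[k] k)
    (hsymm : ∀ a b : l, tr (a * b) = tr (b * a))
    (hndl : ∀ a : l, (∀ b : l, tr (a * b) = 0) → a = 0)
    (hndr : ∀ b : l, (∀ a : l, tr (a * b) = 0) → b = 0)
    (e f : Module.Basis ι k l)
    (hdual : ∀ i j, tr (e i * f j) = if i = j then (1 : k) else 0)
    (hsep : Module.Projective (l ⊗[k] lᵐᵒᵖ) l)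
    {U : Type*} [AddCommGroup U] [Module k U] [Module l U] [Module lᵐᵒᵖ U]
    [IsScalarTower k l U] [IsScalarTower k lᵐᵒᵖ U] [SMulCommClass l lᵐᵒᵖ U] :
    -- the averaging map takes values in the `l`-central elements `U^l`
    (∀ (u : U) (a : l),
      a • (∑ i, e i • (op (f i) • u)) = op a • (∑ i, e i • (op (f i) • u))) ∧
    -- it vanishes on the subspace `[l, U]` spanned by commutators
    (∀ u ∈ Submodule.span k {w : U | ∃ (a : l) (v : U), w = a • v - op a • v},
      (∑ i, e i • (op (f i) • u)) = 0) ∧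
    -- the induced map `U/[l, U] → U^l` is surjective ...
    (∀ u : U, (∀ a : l, a • u = op a • u) → ∃ v : U, (∑ i, e i • (op (f i) • v)) = u) ∧
    -- ... and injective
    (∀ u : U, (∑ i, e i • (op (f i) • u)) = 0 →
      u ∈ Submodule.span k {w : U | ∃ (a : l) (v : U), w = a • v - op a • v}) :=
  statement_4_general tr hsymm e f hdual hsep
end

section
/- Let k be a field and l a finite-dimensional associative unital k-algebra admitting a trace tr₁. Then a k-linear map tr₂ : l → k is a trace on l if and only if there exists a (necessarily unique) invertible central element u of l such that tr₂(a) = tr₁(u·a) for all a ∈ l. In other words, a trace on l, if it exists, is unique up to multiplication by an invertible central element of l. -/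
variable {k : Type*} [Field k] {l : Type*} [Ring l] [Algebra k l] [FiniteDimensional k l]

/-- Let `l` be a finite-dimensional `k`-algebra admitting a trace `tr₁`.  A `k`-linear map
`tr₂ : l → k` is a trace on `l` if and only if there exists a (necessarily unique) invertible
central element `u` of `l` with `tr₂ a = tr₁ (u * a)` for all `a`. -/
theorem statement_8 (tr₁ : l →ₗ[k] k)
    (h₁symm : ∀ a b : l, tr₁ (a * b) = tr₁ (b * a))
    (h₁ndl : ∀ a : l, (∀ b : l, tr₁ (a * b) = 0) → a = 0)
    (h₁ndr : ∀ b : l, (∀ a : l, tr₁ (a * b) = 0) → b = 0)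
    (tr₂ : l →ₗ[k] k) :
    ((∀ a b : l, tr₂ (a * b) = tr₂ (b * a)) ∧
      (∀ a : l, (∀ b : l, tr₂ (a * b) = 0) → a = 0) ∧
      (∀ b : l, (∀ a : l, tr₂ (a * b) = 0) → b = 0)) ↔
    (∃! u : l, IsUnit u ∧ (∀ x : l, u * x = x * u) ∧ ∀ a : l, tr₂ a = tr₁ (u * a)) := by
  classical
  -- uniqueness of u is automatic given existence of properties
  have huniq : ∀ u v : l, (∀ a : l, tr₂ a = tr₁ (u * a)) → (∀ a : l, tr₂ a = tr₁ (v * a)) →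
      u = v := by
    intro u v hu hv
    have : ∀ b : l, tr₁ ((u - v) * b) = 0 := by
      intro b
      rw [sub_mul, map_sub, ← hu b, ← hv b, sub_self]
    have := h₁ndl _ this
    exact sub_eq_zero.mp this
  constructor
  · rintro ⟨h₂symm, h₂ndl, h₂ndr⟩
    -- the map u ↦ tr₁ (u * ·) from l to its dual
    let φ : l →ₗ[k] Module.Dual k l :=
      { toFun := fun u => tr₁ ∘ₗ LinearMap.mulLeft k u
        map_add' := by
          intro u v; ext b; simp [LinearMap.mulLeft_apply, add_mul]
        map_smul' := by
          intro c u; ext b; simp [LinearMap.mulLeft_apply, smul_mul_assoc] }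
    have hφinj : Function.Injective φ := by
      rw [← LinearMap.ker_eq_bot, LinearMap.ker_eq_bot']
      intro u hu
      apply h₁ndl
      intro b
      have := congrArg (fun f => f b) hu
      simpa [φ] using this
    have hφsurj : Function.Surjective φ :=
      (LinearMap.injective_iff_surjective_of_finrank_eq_finrank
        (by simp [Subspace.dual_finrank_eq])).mp hφinj
    obtain ⟨u, hu⟩ := hφsurj tr₂
    have hu' : ∀ a : l, tr₂ a = tr₁ (u * a) := by
      intro a
      have := congrArg (fun f => f a) hu
      simpa [φ] using this.symm
    -- u is central
    have hcen : ∀ x : l, u * x = x * u := by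
      intro x
      have key : ∀ b : l, tr₁ ((u * x - x * u) * b) = 0 := by
        intro b
        have h1 : tr₁ (u * x * b) = tr₁ (x * u * b) := by
          calc tr₁ (u * x * b) = tr₁ (u * (x * b)) := by rw [mul_assoc]
            _ = tr₂ (x * b) := (hu' _).symm
            _ = tr₂ (b * x) := h₂symm x b
            _ = tr₁ (u * (b * x)) := hu' _
            _ = tr₁ ((u * b) * x) := by rw [mul_assoc]
            _ = tr₁ (x * (u * b)) := h₁symm _ _
            _ = tr₁ (x * u * b) := by rw [mul_assoc]
        rw [sub_mul, map_sub, h1, sub_self]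
      have := h₁ndl _ key
      exact sub_eq_zero.mp this
    -- u is a unit: left multiplication by u is injective
    have hinj : Function.Injective (LinearMap.mulLeft k u) := by
      rw [← LinearMap.ker_eq_bot, LinearMap.ker_eq_bot']
      intro b hb
      simp only [LinearMap.mulLeft_apply] at hb
      apply h₂ndr
      intro a
      rw [hu' (a * b), ← mul_assoc, hcen a, mul_assoc, hb, mul_zero, map_zero]
    have hsurj : Function.Surjective (LinearMap.mulLeft k u) :=
      LinearMap.injective_iff_surjective.mp hinj
    obtain ⟨v, hv⟩ := hsurj 1
    simp only [LinearMap.mulLeft_apply] at hv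
    have hv2 : v * u = 1 := by rw [← hcen v]; exact hv
    have hunit : IsUnit u := ⟨⟨u, v, hv, hv2⟩, rfl⟩
    refine ⟨u, ⟨hunit, hcen, hu'⟩, ?_⟩
    rintro w ⟨-, -, hw⟩
    exact huniq w u hw hu'
  · rintro ⟨u, ⟨hunit, hcen, hu'⟩, -⟩
    obtain ⟨U, rfl⟩ := hunit
    refine ⟨?_, ?_, ?_⟩
    · intro a b
      rw [hu' (a * b), hu' (b * a), ← mul_assoc, hcen a, mul_assoc, h₁symm]
      rw [← mul_assoc]
    · intro a ha
      have : ∀ b : l, tr₁ ((U * a) * b) = 0 := by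
        intro b
        rw [mul_assoc, ← hu' (a * b)]
        exact ha b
      have h0 : (U : l) * a = 0 := h₁ndl _ this
      calc a = ↑U⁻¹ * (U * a) := by rw [← mul_assoc, Units.inv_mul, one_mul]
        _ = 0 := by rw [h0, mul_zero]
    · intro b hb
      apply h₁ndr
      intro a
      have := hb (↑U⁻¹ * a)
      rw [hu' (↑U⁻¹ * a * b), ← mul_assoc, ← mul_assoc, Units.mul_inv, one_mul] at this
      exact this
end
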